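/- Let u ∈ C²([0,1]) with u' ≥ c₀ > 0, c ∈ (u(0), u(1)), y_c = u^{-1}(c), and φ₁ the solution of φ₁ = 1 + α²Tφ₁ with T as above. Then φ₁ satisfies the one-sided monotonicity φ₁(y) ≥ φ₁(z) ≥ 1 whenever |y − y_c| ≥ |z − y_c| and y, z lie on the same side of y_c, and |φ₁(y) − 1| ≤ C α² (y − y_c)² φ₁(y). -/

import Mathlib

open MeasureTheory

/-- The operator `T f (y) = ∫_{y_c}^{y} (u(y')−c)^{-2} ∫_{y_c}^{y'} f(z)(u(z)−c)² dz dy'`. -/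
noncomputable def rayT (u : ℝ → ℝ) (c y_c : ℝ) (f : ℝ → ℝ) : ℝ → ℝ :=
  fun y => ∫ y' in y_c..y, ((u y' - c) ^ 2)⁻¹ * ∫ z in y_c..y', f z * (u z - c) ^ 2

/-!
On each side of `y_c` the operator `T` has a nonnegative kernel: if `φ ≥ 0` between `y_c` and `y`
then `T φ y ≥ 0`, and `T φ` grows as `y` moves away from `y_c`. At a first point where `φ₁ ≤ 0`, we
would already have `φ₁ = 1 + α² T φ₁ ≥ 1`, so `φ₁ ≥ 1` throughout, and hence `φ₁` increases away from
`y_c`. Since `u` is monotone, `(u z - c)² ≤ (u y' - c)²` for `z` between `y_c` and `y'`, so the outer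
integrand is bounded by `sup |φ₁| · |y' - y_c|`. Taking the supremum over `[y_c, y]`, which equals
`φ₁ y`, gives `|φ₁ y - 1| ≤ α² (y - y_c)² φ₁ y / 2`. The left side follows from the reflection
`y ↦ -y`.
-/

open Set

theorem ContinuousOn.forall_pos_of_nonneg_imp_pos {α : Type*} [ConditionallyCompleteLinearOrder α]
    [TopologicalSpace α] [OrderTopology α] [DenselyOrdered α] {f : α → ℝ} {a b : α}
    (hf : ContinuousOn f (Icc a b)) (ha : 0 < f a)
    (hstep : ∀ y ∈ Icc a b, (∀ z ∈ Icc a y, 0 ≤ f z) → 0 < f y) :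
    ∀ y ∈ Icc a b, 0 < f y := by
  by_contra! ⟨y, hy, hfy⟩
  set Z := Icc a b ∩ f ⁻¹' Iic 0
  have hZ : IsCompact Z := isCompact_Icc.of_isClosed_subset
    (hf.preimage_isClosed_of_isClosed isClosed_Icc isClosed_Iic) inter_subset_left
  have hm : sInf Z ∈ Z := hZ.sInf_mem ⟨y, hy, hfy⟩
  set m := sInf Z
  have ham : a < m := hm.1.1.lt_of_ne fun h => hm.2.not_gt (h ▸ ha)
  have hsub : Icc a m ⊆ Icc a b := Icc_subset_Icc_right hm.1.2
  have hpos : ∀ z ∈ Ico a m, 0 < f z := fun z hz => by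
    by_contra! hfz
    exact (csInf_le hZ.bddBelow ⟨hsub (Ico_subset_Icc_self hz), hfz⟩).not_gt hz.2
  have hnonneg : closure (Ico a m) ⊆ Icc a m ∩ f ⁻¹' Ici 0 :=
    ((hf.mono hsub).preimage_isClosed_of_isClosed isClosed_Icc isClosed_Ici).closure_subset_iff.2
      fun z hz => ⟨Ico_subset_Icc_self hz, (hpos z hz).le⟩
  rw [closure_Ico ham.ne] at hnonneg
  exact hm.2.not_gt (hstep m (hsub (right_mem_Icc.2 ham.le)) fun z hz => (hnonneg hz).2)

theorem mem_Icc_or_mem_Icc_of_abs_sub_le {a y z : ℝ} (habs : |z - a| ≤ |y - a|)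
    (hside : 0 ≤ (y - a) * (z - a)) : z ∈ Icc a y ∨ z ∈ Icc y a := by
  rcases le_total a y with hy | hy <;> rcases le_total a z with hz | hz
  · rw [abs_of_nonneg (sub_nonneg.2 hz), abs_of_nonneg (sub_nonneg.2 hy)] at habs
    exact Or.inl ⟨hz, by linarith⟩
  · rw [abs_of_nonpos (sub_nonpos.2 hz), abs_of_nonneg (sub_nonneg.2 hy)] at habs
    exact Or.inl ⟨by nlinarith, by linarith⟩
  · rw [abs_of_nonneg (sub_nonneg.2 hz), abs_of_nonpos (sub_nonpos.2 hy)] at habs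
    exact Or.inr ⟨by linarith, by nlinarith⟩
  · rw [abs_of_nonpos (sub_nonpos.2 hz), abs_of_nonpos (sub_nonpos.2 hy)] at habs
    exact Or.inr ⟨by linarith, hz⟩

/-- The outer integrand of `rayT`: `rayT u c y_c φ y` is definitionally
`∫ y' in y_c..y, rayIntegrand u c y_c φ y'`. -/
noncomputable def rayIntegrand (u : ℝ → ℝ) (c y_c : ℝ) (φ : ℝ → ℝ) (y : ℝ) : ℝ :=
  ((u y - c) ^ 2)⁻¹ * ∫ z in y_c..y, φ z * (u z - c) ^ 2

section RayOperator

variable {u φ : ℝ → ℝ} {c y_c y : ℝ}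

theorem rayT_self : rayT u c y_c φ y_c = 0 := intervalIntegral.integral_same

theorem rayIntegrand_nonneg (hy : y_c ≤ y) (hφ : ∀ z ∈ Icc y_c y, 0 ≤ φ z) :
    0 ≤ rayIntegrand u c y_c φ y :=
  mul_nonneg (inv_nonneg.2 (sq_nonneg _)) <|
    intervalIntegral.integral_nonneg hy fun z hz => mul_nonneg (hφ z hz) (sq_nonneg _)

theorem rayT_nonneg (hy : y_c ≤ y) (hφ : ∀ z ∈ Icc y_c y, 0 ≤ φ z) : 0 ≤ rayT u c y_c φ y :=
  intervalIntegral.integral_nonneg hy fun _ hy' =>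
    rayIntegrand_nonneg hy'.1 fun z hz => hφ z ⟨hz.1, hz.2.trans hy'.2⟩

theorem abs_rayIntegrand_le {K : ℝ} (hu : MonotoneOn u (Icc y_c y)) (hy : y_c ≤ y)
    (hφ : ∀ z ∈ Icc y_c y, |φ z| ≤ K) : |rayIntegrand u (u y_c) y_c φ y| ≤ K * (y - y_c) := by
  set S := (u y - u y_c) ^ 2
  have hK : 0 ≤ K := (abs_nonneg _).trans (hφ y_c (left_mem_Icc.2 hy))
  have hsq : ∀ z ∈ Icc y_c y, (u z - u y_c) ^ 2 ≤ S := fun z hz =>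
    pow_le_pow_left₀ (sub_nonneg.2 (hu (left_mem_Icc.2 hy) hz hz.1))
      (sub_le_sub_right (hu hz (right_mem_Icc.2 hy) hz.2) _) 2
  have hI : |∫ z in y_c..y, φ z * (u z - u y_c) ^ 2| ≤ K * S * |y - y_c| := by
    refine intervalIntegral.norm_integral_le_of_norm_le_const (E := ℝ) fun z hz => ?_
    rw [uIoc_of_le hy] at hz
    rw [Real.norm_eq_abs, abs_mul, abs_sq]
    exact mul_le_mul (hφ z (Ioc_subset_Icc_self hz)) (hsq z (Ioc_subset_Icc_self hz))
      (sq_nonneg _) hK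
  -- `S` vanishes when `u` is flat on `[y_c, y]`; then `S⁻¹ = 0` and the integrand is `0`.
  have hSS : S⁻¹ * S ≤ 1 := by
    rcases eq_or_ne S 0 with h | h <;> simp [h]
  rw [abs_of_nonneg (sub_nonneg.2 hy)] at hI
  calc |rayIntegrand u (u y_c) y_c φ y| ≤ S⁻¹ * (K * S * (y - y_c)) := by
        rw [rayIntegrand, abs_mul, abs_inv, abs_sq]
        exact mul_le_mul_of_nonneg_left hI (inv_nonneg.2 (sq_nonneg _))
    _ = K * (y - y_c) * (S⁻¹ * S) := by ring
    _ ≤ K * (y - y_c) := mul_le_of_le_one_right (mul_nonneg hK (sub_nonneg.2 hy)) hSS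

theorem abs_rayT_le {K : ℝ} (hu : MonotoneOn u (Icc y_c y)) (hy : y_c ≤ y)
    (hφ : ∀ z ∈ Icc y_c y, |φ z| ≤ K) : |rayT u (u y_c) y_c φ y| ≤ K * (y - y_c) ^ 2 / 2 := by
  have hbound := intervalIntegral.norm_integral_le_of_norm_le (μ := volume)
    (f := rayIntegrand u (u y_c) y_c φ) (g := fun y' => K * (y' - y_c)) hy
    (Filter.Eventually.of_forall fun y' (hy' : y' ∈ Ioc y_c y) =>
      abs_rayIntegrand_le (hu.mono (Icc_subset_Icc_right hy'.2)) hy'.1.le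
        fun z hz => hφ z ⟨hz.1, hz.2.trans hy'.2⟩)
    ((continuous_const.mul (continuous_id.sub continuous_const)).intervalIntegrable _ _)
  convert hbound using 1
  · rfl
  · rw [intervalIntegral.integral_const_mul, intervalIntegral.integral_comp_sub_right (fun t => t),
      integral_id]
    ring

theorem intervalIntegrable_rayIntegrand {B : ℝ} (hu : ContinuousOn u (Icc y_c B))
    (hmono : MonotoneOn u (Icc y_c B)) (hφ : ContinuousOn φ (Icc y_c B)) (hB : y_c ≤ B) :
    IntervalIntegrable (rayIntegrand u (u y_c) y_c φ) volume y_c B := by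
  obtain ⟨M, hM⟩ := isCompact_Icc.exists_bound_of_continuousOn hφ
  have hI : ContinuousOn (fun y => ∫ z in y_c..y, φ z * (u z - u y_c) ^ 2) (Icc y_c B) := by
    have := intervalIntegral.continuousOn_primitive_interval (μ := volume) (a := y_c) (b := B)
      (f := fun z => φ z * (u z - u y_c) ^ 2)
    rw [uIcc_of_le hB] at this
    exact this (hφ.mul ((hu.sub continuousOn_const).pow 2)).integrableOn_Icc
  have hmeas : AEStronglyMeasurable (rayIntegrand u (u y_c) y_c φ) (volume.restrict (Ioc y_c B)) :=
    ((((hu.mono Ioc_subset_Icc_self).aestronglyMeasurable measurableSet_Ioc).aemeasurable.sub_const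
      _).pow_const 2).inv.mul
      ((hI.mono Ioc_subset_Icc_self).aestronglyMeasurable measurableSet_Ioc).aemeasurable
      |>.aestronglyMeasurable
  rw [intervalIntegrable_iff_integrableOn_Ioc_of_le hB]
  refine Integrable.mono' (integrableOn_const (C := M * (B - y_c)) measure_Ioc_lt_top.ne) hmeas
    (ae_restrict_of_forall_mem measurableSet_Ioc fun y hy => ?_)
  have hyB : Icc y_c y ⊆ Icc y_c B := Icc_subset_Icc_right hy.2
  calc ‖rayIntegrand u (u y_c) y_c φ y‖ ≤ M * (y - y_c) :=
        abs_rayIntegrand_le (hmono.mono hyB) hy.1.le fun z hz => hM z (hyB hz)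
    _ ≤ M * (B - y_c) := by
        gcongr
        · exact (norm_nonneg _).trans (hM y_c (left_mem_Icc.2 hB))
        · exact hy.2

theorem rayIntegrand_reflect (u φ : ℝ → ℝ) (c y_c s : ℝ) :
    rayIntegrand (fun t => -u (-t)) (-c) (-y_c) (fun t => φ (-t)) s =
      -rayIntegrand u c y_c φ (-s) := by
  have hsq : ∀ t, (-u (-t) - -c) ^ 2 = (u (-t) - c) ^ 2 := fun t => by ring
  simp only [rayIntegrand, hsq]
  rw [intervalIntegral.integral_comp_neg (fun w => φ w * (u w - c) ^ 2), neg_neg,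
    intervalIntegral.integral_symm, mul_neg]

theorem rayT_reflect (u φ : ℝ → ℝ) (c y_c x : ℝ) :
    rayT (fun t => -u (-t)) (-c) (-y_c) (fun t => φ (-t)) x = rayT u c y_c φ (-x) := by
  show ∫ s in -y_c..x, rayIntegrand (fun t => -u (-t)) (-c) (-y_c) (fun t => φ (-t)) s =
    ∫ s in y_c..(-x), rayIntegrand u c y_c φ s
  simp_rw [rayIntegrand_reflect]
  rw [intervalIntegral.integral_neg, intervalIntegral.integral_comp_neg (rayIntegrand u c y_c φ),
    neg_neg, intervalIntegral.integral_symm, neg_neg]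

end RayOperator

section FixedPoint

variable {u φ : ℝ → ℝ} {c y_c B α : ℝ}

theorem one_le_of_eq_one_add_rayT (hφ : ContinuousOn φ (Icc y_c B))
    (hfix : ∀ y ∈ Icc y_c B, φ y = 1 + α ^ 2 * rayT u c y_c φ y) :
    ∀ y ∈ Icc y_c B, 1 ≤ φ y := by
  have hge : ∀ y ∈ Icc y_c B, (∀ z ∈ Icc y_c y, 0 ≤ φ z) → 1 ≤ φ y := fun y hy h => by
    rw [hfix y hy]
    exact le_add_of_nonneg_right (mul_nonneg (sq_nonneg α) (rayT_nonneg hy.1 h))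
  intro y hy
  have hpos := hφ.forall_pos_of_nonneg_imp_pos
    (by rw [hfix y_c ⟨le_rfl, hy.1.trans hy.2⟩, rayT_self]; norm_num)
    fun y hy h => one_pos.trans_le (hge y hy h)
  exact hge y hy fun z hz => (hpos z ⟨hz.1, hz.2.trans hy.2⟩).le

theorem monotoneOn_of_eq_one_add_rayT (hu : ContinuousOn u (Icc y_c B))
    (hmono : MonotoneOn u (Icc y_c B)) (hφ : ContinuousOn φ (Icc y_c B))
    (hfix : ∀ y ∈ Icc y_c B, φ y = 1 + α ^ 2 * rayT u (u y_c) y_c φ y) :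
    MonotoneOn φ (Icc y_c B) := by
  have hone := one_le_of_eq_one_add_rayT hφ hfix
  intro z hz y hy hzy
  have hyB : Icc y_c y ⊆ Icc y_c B := Icc_subset_Icc_right hy.2
  rw [hfix z hz, hfix y hy]
  gcongr
  exact intervalIntegral.integral_mono_interval le_rfl hz.1 hzy
    (ae_restrict_of_forall_mem measurableSet_Ioc fun t ht => rayIntegrand_nonneg ht.1.le
      fun s hs => zero_le_one.trans (hone s ⟨hs.1, hs.2.trans (ht.2.trans hy.2)⟩))
    (intervalIntegrable_rayIntegrand (hu.mono hyB) (hmono.mono hyB) (hφ.mono hyB) hy.1)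

theorem abs_sub_one_le_of_eq_one_add_rayT (hu : ContinuousOn u (Icc y_c B))
    (hmono : MonotoneOn u (Icc y_c B)) (hφ : ContinuousOn φ (Icc y_c B))
    (hfix : ∀ y ∈ Icc y_c B, φ y = 1 + α ^ 2 * rayT u (u y_c) y_c φ y) :
    ∀ y ∈ Icc y_c B, |φ y - 1| ≤ 1 / 2 * α ^ 2 * (y - y_c) ^ 2 * φ y := by
  intro y hy
  have hone := one_le_of_eq_one_add_rayT hφ hfix
  have hyB : Icc y_c y ⊆ Icc y_c B := Icc_subset_Icc_right hy.2
  have hT := abs_rayT_le (K := φ y) (hmono.mono hyB) hy.1 fun z hz => by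
    rw [abs_of_nonneg (zero_le_one.trans (hone z (hyB hz)))]
    exact monotoneOn_of_eq_one_add_rayT hu hmono hφ hfix (hyB hz) hy hz.2
  calc |φ y - 1| = α ^ 2 * |rayT u (u y_c) y_c φ y| := by
        rw [hfix y hy, add_sub_cancel_left, abs_mul, abs_sq]
    _ ≤ α ^ 2 * (φ y * (y - y_c) ^ 2 / 2) := mul_le_mul_of_nonneg_left hT (sq_nonneg α)
    _ = 1 / 2 * α ^ 2 * (y - y_c) ^ 2 * φ y := by ring

theorem rayT_fixedPoint_right (hu : ContinuousOn u (Icc y_c B))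
    (hmono : MonotoneOn u (Icc y_c B)) (hφ : ContinuousOn φ (Icc y_c B))
    (hfix : ∀ y ∈ Icc y_c B, φ y = 1 + α ^ 2 * rayT u (u y_c) y_c φ y) :
    ∀ y ∈ Icc y_c B, ∀ z ∈ Icc y_c y,
      1 ≤ φ z ∧ φ z ≤ φ y ∧ |φ y - 1| ≤ 1 / 2 * α ^ 2 * (y - y_c) ^ 2 * φ y := by
  intro y hy z hz
  have hzB : z ∈ Icc y_c B := ⟨hz.1, hz.2.trans hy.2⟩
  exact ⟨one_le_of_eq_one_add_rayT hφ hfix z hzB,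
    monotoneOn_of_eq_one_add_rayT hu hmono hφ hfix hzB hy hz.2,
    abs_sub_one_le_of_eq_one_add_rayT hu hmono hφ hfix y hy⟩

theorem rayT_fixedPoint_left {A : ℝ} (hu : ContinuousOn u (Icc A y_c))
    (hmono : MonotoneOn u (Icc A y_c)) (hφ : ContinuousOn φ (Icc A y_c))
    (hfix : ∀ y ∈ Icc A y_c, φ y = 1 + α ^ 2 * rayT u (u y_c) y_c φ y) :
    ∀ y ∈ Icc A y_c, ∀ z ∈ Icc y y_c,
      1 ≤ φ z ∧ φ z ≤ φ y ∧ |φ y - 1| ≤ 1 / 2 * α ^ 2 * (y - y_c) ^ 2 * φ y := by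
  have hneg : MapsTo Neg.neg (Icc (-y_c) (-A)) (Icc A y_c) := fun t ht =>
    ⟨le_neg.1 ht.2, neg_le.1 ht.1⟩
  have hright := rayT_fixedPoint_right (u := fun t => -u (-t)) (φ := fun t => φ (-t))
    (y_c := -y_c) (B := -A) (hu.comp continuousOn_neg hneg).neg
    (fun x hx y hy hxy => neg_le_neg (hmono (hneg hy) (hneg hx) (neg_le_neg hxy)))
    (hφ.comp continuousOn_neg hneg) (fun x hx => by simpa [rayT_reflect] using hfix (-x) (hneg hx))
  intro y hy z hz
  have h := hright (-y) ⟨neg_le_neg hy.2, neg_le_neg hy.1⟩ (-z) ⟨neg_le_neg hz.2, neg_le_neg hz.1⟩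
  simp only [neg_neg, neg_sub_neg] at h
  rwa [sub_sq_comm y_c y] at h

end FixedPoint

theorem stmt_15_general (u u' : ℝ → ℝ) (c₀ : ℝ) (hc₀ : 0 < c₀)
    (hu : ∀ y ∈ Set.Icc (0:ℝ) 1, HasDerivAt u (u' y) y)
    (hlow : ∀ y ∈ Set.Icc (0:ℝ) 1, c₀ ≤ u' y)
    (y_c : ℝ) (hyc : y_c ∈ Set.Icc (0:ℝ) 1) (c : ℝ) (hc : c = u y_c) :
    ∃ C : ℝ, 0 < C ∧ ∀ α : ℝ, 1 ≤ α → ∀ φ₁ : ℝ → ℝ, ContinuousOn φ₁ (Set.Icc 0 1) →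
      (∀ y ∈ Set.Icc (0:ℝ) 1, φ₁ y = 1 + α ^ 2 * rayT u c y_c φ₁ y) →
      (∀ y ∈ Set.Icc (0:ℝ) 1, ∀ z ∈ Set.Icc (0:ℝ) 1,
        |z - y_c| ≤ |y - y_c| → 0 ≤ (y - y_c) * (z - y_c) →
          1 ≤ φ₁ z ∧ φ₁ z ≤ φ₁ y) ∧
      (∀ y ∈ Set.Icc (0:ℝ) 1, |φ₁ y - 1| ≤ C * α ^ 2 * (y - y_c) ^ 2 * φ₁ y) := by
  subst hc
  have hcont : ContinuousOn u (Icc 0 1) := fun y hy => (hu y hy).continuousAt.continuousWithinAt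
  have hmono : MonotoneOn u (Icc 0 1) :=
    monotoneOn_of_hasDerivWithinAt_nonneg (convex_Icc 0 1) hcont
      (fun y hy => (hu y (interior_subset hy)).hasDerivWithinAt)
      fun y hy => hc₀.le.trans (hlow y (interior_subset hy))
  refine ⟨1 / 2, one_half_pos, fun α _ φ hφ hfix => ?_⟩
  have hR : Icc y_c 1 ⊆ Icc 0 1 := Icc_subset_Icc_left hyc.1
  have hL : Icc 0 y_c ⊆ Icc 0 1 := Icc_subset_Icc_right hyc.2
  have right := rayT_fixedPoint_right (hcont.mono hR) (hmono.mono hR) (hφ.mono hR)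
    fun y hy => hfix y (hR hy)
  have left := rayT_fixedPoint_left (hcont.mono hL) (hmono.mono hL) (hφ.mono hL)
    fun y hy => hfix y (hL hy)
  refine ⟨fun y hy z _ habs hside => ?_, fun y hy => ?_⟩
  · rcases mem_Icc_or_mem_Icc_of_abs_sub_le habs hside with hz | hz
    · exact (right y ⟨hz.1.trans hz.2, hy.2⟩ z hz).imp_right And.left
    · exact (left y ⟨hy.1, hz.1.trans hz.2⟩ z hz).imp_right And.left
  · rcases le_total y_c y with h | h
    · exact (right y ⟨h, hy.2⟩ y ⟨h, le_rfl⟩).2.2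
    · exact (left y ⟨hy.1, h⟩ y ⟨le_rfl, h⟩).2.2

theorem stmt_15 (u u' : ℝ → ℝ) (c₀ : ℝ) (hc₀ : 0 < c₀)
    (hu2 : ContDiffOn ℝ 2 u (Set.Icc 0 1))
    (hu : ∀ y ∈ Set.Icc (0:ℝ) 1, HasDerivAt u (u' y) y)
    (hlow : ∀ y ∈ Set.Icc (0:ℝ) 1, c₀ ≤ u' y)
    (y_c : ℝ) (hyc : y_c ∈ Set.Icc (0:ℝ) 1) (c : ℝ) (hc : c = u y_c)
    (hcin : c ∈ Set.Ioo (u 0) (u 1)) :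
    ∃ C : ℝ, 0 < C ∧ ∀ α : ℝ, 1 ≤ α → ∀ φ₁ : ℝ → ℝ, ContinuousOn φ₁ (Set.Icc 0 1) →
      (∀ y ∈ Set.Icc (0:ℝ) 1, φ₁ y = 1 + α ^ 2 * rayT u c y_c φ₁ y) →
      (∀ y ∈ Set.Icc (0:ℝ) 1, ∀ z ∈ Set.Icc (0:ℝ) 1,
        |z - y_c| ≤ |y - y_c| → 0 ≤ (y - y_c) * (z - y_c) →
          1 ≤ φ₁ z ∧ φ₁ z ≤ φ₁ y) ∧
      (∀ y ∈ Set.Icc (0:ℝ) 1, |φ₁ y - 1| ≤ C * α ^ 2 * (y - y_c) ^ 2 * φ₁ y) :=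
  stmt_15_general u u' c₀ hc₀ hu hlow y_c hyc c hc
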